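/- arXiv:1510.07643 — 2 statements merged into one kernel-verified Lean document; each statement's English description precedes it below -/
import Mathlib

section
/- Let B ∈ ℂ^{N×N} and r > 0 be such that every eigenvalue λ of B satisfies |λ| ≥ r. Then B is invertible and ‖B^{−1}‖ ≤ ‖B‖^n r^{−n−1} for every integer n ≥ N−1, where ‖·‖ denotes the operator norm of a matrix acting on ℂ^N with the Euclidean norm. -/
open MeasureTheory Complex Filter Finset
open scoped ENNReal NNReal Topology

noncomputable section

/-- Euclidean space `ℝ^d`. -/
abbrev Rd (d : ℕ) : Type := EuclideanSpace ℝ (Fin d)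
/-- Euclidean space `ℂ^N`. -/
abbrev CN (N : ℕ) : Type := EuclideanSpace ℂ (Fin N)
/-- `N × N` complex matrices. -/
abbrev Mat (N : ℕ) : Type := Matrix (Fin N) (Fin N) ℂ
/-- Space-time `ℝ × ℝ^d`. -/
abbrev STd (d : ℕ) : Type := ℝ × Rd d

/-- The operator norm of a matrix acting on `ℂ^N` with the Euclidean norm. -/
def mOpNorm {N : ℕ} (M : Mat N) : ℝ :=
  ‖(Matrix.toEuclideanCLM (𝕜 := ℂ) M : CN N →L[ℂ] CN N)‖

/-- A matrix acting on a vector of `ℂ^N`. -/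
def matVec {N : ℕ} (M : Mat N) (x : CN N) : CN N :=
  (Matrix.toEuclideanCLM (𝕜 := ℂ) M : CN N →L[ℂ] CN N) x

/-- The length `|α|` of a multiindex. -/
def deg {d : ℕ} (α : Fin d → ℕ) : ℕ := ∑ i, α i

/-- The finite set of multiindices `α` on `ℝ^d` with `|α| ≤ k`. -/
def idxLe (d k : ℕ) : Finset (Fin d → ℕ) :=
  (Finset.Icc 0 (fun _ => k)).filter (fun α => deg α ≤ k)

/-- The finite set of multiindices `α` on `ℝ^d` with `|α| = k`. -/
def idxEq (d k : ℕ) : Finset (Fin d → ℕ) :=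
  (Finset.Icc 0 (fun _ => k)).filter (fun α => deg α = k)

/-- The monomial `ξ^α`. -/
def monom {d : ℕ} (α : Fin d → ℕ) (ξ : Rd d) : ℝ := ∏ i, ξ i ^ α i

/-- The principal symbol `A_#(ξ) = ∑_{|α| = |β| = m} ξ^{α+β} a_{αβ}` of the differential
operator with (constant) coefficients `a`. -/
def pSymb (d m N : ℕ) (a : (Fin d → ℕ) → (Fin d → ℕ) → Mat N) (ξ : Rd d) : Mat N :=
  ∑ α ∈ idxEq d m, ∑ β ∈ idxEq d m, (monom (α + β) ξ : ℂ) • a α β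

/-- Membership in the open sector `Σ_θ = {z ≠ 0 : |arg z| < θ}`. -/
def inSector (θ : ℝ) (z : ℂ) : Prop := z ≠ 0 ∧ |z.arg| < θ

/-- `A ∈ Ell(θ, κ, K)`: uniform ellipticity of angle `θ`, for a `2m`-th order operator with
coefficients `a` (only the principal coefficients `|α| = |β| = m` enter the spectral condition,
and all coefficients with `|α|, |β| ≤ m` are bounded by `K`). -/
def EllSec (d m N : ℕ) (θ κ K : ℝ) (a : (Fin d → ℕ) → (Fin d → ℕ) → Mat N) : Prop :=
  (∀ α ∈ idxEq d m, ∀ β ∈ idxEq d m, mOpNorm (a α β) ≤ K) ∧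
  ∀ ξ : Rd d, ‖ξ‖ = 1 → ∀ z ∈ spectrum ℂ (pSymb d m N a ξ),
    inSector θ z ∧ κ ≤ ‖z‖

/-- `A ∈ Ell^{LH}(κ, K)`: the Legendre–Hadamard ellipticity condition
`Re ⟨x, A_#(ξ) x⟩ ≥ κ ‖x‖²` for `|ξ| = 1`, together with the bound `‖a_{αβ}‖ ≤ K`
for all coefficients with `|α|, |β| ≤ m`. -/
def EllLH (d m N : ℕ) (κ K : ℝ) (a : (Fin d → ℕ) → (Fin d → ℕ) → Mat N) : Prop :=
  (∀ α ∈ idxLe d m, ∀ β ∈ idxLe d m, mOpNorm (a α β) ≤ K) ∧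
  ∀ ξ : Rd d, ‖ξ‖ = 1 → ∀ x : CN N,
    κ * ‖x‖ ^ 2 ≤ (inner ℂ x (matVec (pSymb d m N a ξ) x) : ℂ).re

/-- `Ell^{LH}(κ, K)` for a homogeneous operator (only principal coefficients). -/
def EllLHhom (d m N : ℕ) (κ K : ℝ) (a : (Fin d → ℕ) → (Fin d → ℕ) → Mat N) : Prop :=
  (∀ α ∈ idxEq d m, ∀ β ∈ idxEq d m, mOpNorm (a α β) ≤ K) ∧
  ∀ ξ : Rd d, ‖ξ‖ = 1 → ∀ x : CN N,
    κ * ‖x‖ ^ 2 ≤ (inner ℂ x (matVec (pSymb d m N a ξ) x) : ℂ).re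

/-- The axis-parallel cube with center `c` and side length `r`. -/
def cube (d : ℕ) (c : Rd d) (r : ℝ) : Set (Rd d) := {x | ∀ i, |x i - c i| ≤ r / 2}

/-- The Muckenhoupt `A_p` characteristic `[w]_{A_p}` of a weight on `ℝ^d`. -/
def apConstE (d : ℕ) (p : ℝ) (w : Rd d → ℝ) : ℝ≥0∞ :=
  ⨆ (c : Rd d) (r : ℝ) (_ : 0 < r),
    ((∫⁻ x in cube d c r, ENNReal.ofReal (w x)) / ENNReal.ofReal (r ^ d)) *
      ((∫⁻ x in cube d c r, ENNReal.ofReal (w x ^ (-1 / (p - 1)))) /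
        ENNReal.ofReal (r ^ d)) ^ (p - 1)

/-- `w` is an `A_p` weight on `ℝ^d`. -/
def IsApE (d : ℕ) (p : ℝ) (w : Rd d → ℝ) : Prop :=
  Measurable w ∧ (∀ x, 0 < w x) ∧ apConstE d p w < ⊤

/-- The Muckenhoupt `A_p` characteristic `[v]_{A_p}` of a weight on `ℝ`. -/
def apConstR (p : ℝ) (v : ℝ → ℝ) : ℝ≥0∞ :=
  ⨆ (c : ℝ) (r : ℝ) (_ : 0 < r),
    ((∫⁻ t in Set.Icc c (c + r), ENNReal.ofReal (v t)) / ENNReal.ofReal r) *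
      ((∫⁻ t in Set.Icc c (c + r), ENNReal.ofReal (v t ^ (-1 / (p - 1)))) /
        ENNReal.ofReal r) ^ (p - 1)

/-- `v` is an `A_p` weight on `ℝ`. -/
def IsApR (p : ℝ) (v : ℝ → ℝ) : Prop :=
  Measurable v ∧ (∀ t, 0 < v t) ∧ apConstR p v < ⊤

/-- The measure `w(x) dx` on `ℝ^d`. -/
def wMeasE (d : ℕ) (w : Rd d → ℝ) : Measure (Rd d) :=
  volume.withDensity fun x => ENNReal.ofReal (w x)

/-- The measure `v(t) dt` on `ℝ`. -/
def wMeasR (v : ℝ → ℝ) : Measure ℝ := volume.withDensity fun t => ENNReal.ofReal (v t)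

/-- The norm of `L^q(ℝ^d, w; ℂ^N)`. -/
def nLq {d : ℕ} {E : Type*} [NormedAddCommGroup E] (q : ℝ) (w : Rd d → ℝ) (f : Rd d → E) :
    ℝ≥0∞ :=
  (∫⁻ x, (‖f x‖₊ : ℝ≥0∞) ^ q ∂(wMeasE d w)) ^ (1 / q)

/-- The norm of `L^p(ℝ, v; L^q(ℝ^d, w; ℂ^N))` for a function on space-time. -/
def nLpLq {d : ℕ} {E : Type*} [NormedAddCommGroup E] (p q : ℝ) (v : ℝ → ℝ) (w : Rd d → ℝ)
    (u : STd d → E) : ℝ≥0∞ :=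
  (∫⁻ t, ((∫⁻ x, (‖u (t, x)‖₊ : ℝ≥0∞) ^ q ∂(wMeasE d w)) ^ (1 / q)) ^ p ∂(wMeasR v)) ^ (1 / p)

variable {E : Type*}

/-- Partial derivative `∂_i` on `ℝ^d`. -/
def pder {d : ℕ} [NormedAddCommGroup E] [NormedSpace ℝ E] (i : Fin d) (f : Rd d → E) :
    Rd d → E :=
  fun x => fderiv ℝ f x (EuclideanSpace.single i (1 : ℝ))

/-- Iterated partial derivative `∂^γ` on `ℝ^d`. -/
def pderM {d : ℕ} [NormedAddCommGroup E] [NormedSpace ℝ E] (γ : Fin d → ℕ) (f : Rd d → E) :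
    Rd d → E :=
  (List.finRange d).foldr (fun i g => (pder i)^[γ i] g) f

/-- Time derivative `∂_t` on space-time `ℝ × ℝ^d`. -/
def pdt {d : ℕ} [NormedAddCommGroup E] [NormedSpace ℝ E] (f : STd d → E) : STd d → E :=
  fun z => fderiv ℝ f z (1, 0)

/-- Spatial partial derivative `∂_{x_i}` on space-time `ℝ × ℝ^d`. -/
def pdx {d : ℕ} [NormedAddCommGroup E] [NormedSpace ℝ E] (i : Fin d) (f : STd d → E) :
    STd d → E :=
  fun z => fderiv ℝ f z (0, EuclideanSpace.single i (1 : ℝ))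

/-- Iterated spatial partial derivative `∂_x^γ` on space-time. -/
def pdxM {d : ℕ} [NormedAddCommGroup E] [NormedSpace ℝ E] (γ : Fin d → ℕ) (f : STd d → E) :
    STd d → E :=
  (List.finRange d).foldr (fun i g => (pdx i)^[γ i] g) f

/-- A (scalar-valued) test function: smooth and compactly supported. -/
def IsTest {V : Type*} [NormedAddCommGroup V] [NormedSpace ℝ V] (φ : V → ℂ) : Prop :=
  ContDiff ℝ (⊤ : ℕ∞) φ ∧ HasCompactSupport φ

/-- A vector-valued test function: smooth and compactly supported. -/
def IsTestV {V : Type*} [NormedAddCommGroup V] [NormedSpace ℝ V] {N : ℕ} (φ : V → CN N) : Prop :=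
  ContDiff ℝ (⊤ : ℕ∞) φ ∧ HasCompactSupport φ

/-- `g = ∂^γ f` in the sense of distributions on `ℝ^d`. -/
def HasWDx {d N : ℕ} (γ : Fin d → ℕ) (f g : Rd d → CN N) : Prop :=
  ∀ φ : Rd d → ℂ, IsTest φ →
    ∫ x, pderM γ φ x • f x = ((-1 : ℂ) ^ deg γ) • ∫ x, φ x • g x

/-- `g = ∂_t^k ∂_x^γ u` in the sense of distributions on space-time `ℝ × ℝ^d`. -/
def HasWDst {d N : ℕ} (k : ℕ) (γ : Fin d → ℕ) (u g : STd d → CN N) : Prop :=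
  ∀ φ : STd d → ℂ, IsTest φ →
    ∫ z, pdt^[k] (pdxM γ φ) z • u z = ((-1 : ℂ) ^ (k + deg γ)) • ∫ z, φ z • g z

/-- `u'` is the weak derivative of the (Banach space valued) function `u` on `(s, T)`. -/
def HasWDt {Y : Type*} [NormedAddCommGroup Y] [NormedSpace ℝ Y] (s T : ℝ) (u u' : ℝ → Y) :
    Prop :=
  ∀ φ : ℝ → ℝ, ContDiff ℝ (⊤ : ℕ∞) φ → HasCompactSupport φ →
    Function.support φ ⊆ Set.Ioo s T →
    ∫ t in Set.Ioo s T, deriv φ t • u t = - ∫ t in Set.Ioo s T, φ t • u' t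

/-- The bilinear pairing `⟨x, y⟩ = ∑ x_i y_i` on `ℂ^N`. -/
def bpair {N : ℕ} (x y : CN N) : ℂ := ∑ i, x i * y i

/-- `u` lies in the weighted Sobolev space `W^{k,q}(ℝ^d, w; ℂ^N)`, with the family `g`
witnessing its distributional derivatives: `g γ = ∂^γ u ∈ L^q(ℝ^d, w; ℂ^N)` for `|γ| ≤ k`. -/
def SobClass (d N k : ℕ) (q : ℝ) (w : Rd d → ℝ) (u : Rd d → CN N)
    (g : (Fin d → ℕ) → Rd d → CN N) : Prop :=
  g 0 = u ∧ ∀ γ ∈ idxLe d k,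
    AEStronglyMeasurable (g γ) volume ∧ nLq q w (g γ) < ⊤ ∧ HasWDx γ u (g γ)

/-- The homogeneous operator `A u = ∑_{|α|=|β|=m} a_{αβ} D^α D^β u` evaluated using the
derivative witnesses `g` (note `D^α D^β = (-1)^m ∂^{α+β}` for `|α| = |β| = m`). -/
def applyAconst (d m N : ℕ) (a : (Fin d → ℕ) → (Fin d → ℕ) → Mat N)
    (g : (Fin d → ℕ) → Rd d → CN N) (x : Rd d) : CN N :=
  ∑ α ∈ idxEq d m, ∑ β ∈ idxEq d m, ((-1 : ℂ) ^ m) • matVec (a α β) (g (α + β) x)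

/-- The weighted Lebesgue space `X₀ = L^q(ℝ^d, w; ℂ^N)` as a type. -/
abbrev X0 (d N : ℕ) (q : ℝ) (w : Rd d → ℝ) : Type :=
  Lp (CN N) (ENNReal.ofReal q) (wMeasE d w)

/-- An element `u` of `X₀` lies in `X₁ = W^{2m,q}(ℝ^d, w; ℂ^N)`, with derivative witnesses
`g γ ∈ X₀`, `|γ| ≤ k`. -/
def MemSob (d N : ℕ) (k : ℕ) (q : ℝ) (w : Rd d → ℝ) (u : X0 d N q w)
    (g : (Fin d → ℕ) → X0 d N q w) : Prop :=
  g 0 = u ∧ ∀ γ ∈ idxLe d k, HasWDx γ (↑u) (↑(g γ))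

/-- The operator `A(t) u = ∑_{|α|=|β|=m} a_{αβ}(t) D^α D^β u` with `x`-independent
coefficients, as a map on `X₀` through the derivative witnesses `g`. -/
def applyAt (d m N : ℕ) (q : ℝ) (w : Rd d → ℝ) [Fact (1 ≤ ENNReal.ofReal q)]
    (a : ℝ → (Fin d → ℕ) → (Fin d → ℕ) → Mat N) (t : ℝ)
    (g : (Fin d → ℕ) → X0 d N q w) : X0 d N q w :=
  ∑ α ∈ idxEq d m, ∑ β ∈ idxEq d m,
    ((-1 : ℂ) ^ m) • ((Matrix.toEuclideanCLM (𝕜 := ℂ) (a t α β) :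
        CN N →L[ℂ] CN N).compLp (g (α + β)))

/-- `S(t,s)`, `s ≤ t`, is a strongly continuous evolution family on
`X₀ = L^q(ℝ^d, w; ℂ^N)` for the operators `A(t) = ∑_{|α|=|β|=m} a_{αβ}(t) D^α D^β`
with domain `X₁ = W^{2m,q}(ℝ^d, w; ℂ^N)` (Definition 2.1): (i) the algebraic evolution laws;
(ii) strong continuity; (iii) for `x ∈ X₁`, `t ↦ S(t,s)x` lies in
`L¹(s,T;X₁) ∩ W^{1,1}(s,T;X₀)` and solves `u' + A(t)u = 0`; (iv) for `x ∈ X₁`,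
`s ↦ S(t,s)x` lies in `W^{1,1}(T,t;X₀)` and solves `u'(s) = S(t,s)A(s)x`. -/
def IsEvoFam (d m N : ℕ) (q : ℝ) (w : Rd d → ℝ) [Fact (1 ≤ ENNReal.ofReal q)]
    (a : ℝ → (Fin d → ℕ) → (Fin d → ℕ) → Mat N)
    (S : ℝ → ℝ → (X0 d N q w →L[ℂ] X0 d N q w)) : Prop :=
  (∀ s, S s s = ContinuousLinearMap.id ℂ (X0 d N q w)) ∧
  (∀ s r t : ℝ, s ≤ r → r ≤ t → (S t r).comp (S r s) = S t s) ∧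
  (∀ x : X0 d N q w,
    ContinuousOn (fun p : ℝ × ℝ => S p.1 p.2 x) {p : ℝ × ℝ | p.2 ≤ p.1}) ∧
  (∀ s T : ℝ, s < T → ∀ (x : X0 d N q w) (gx : (Fin d → ℕ) → X0 d N q w),
    MemSob d N (2*m) q w x gx →
    ∃ G : ℝ → (Fin d → ℕ) → X0 d N q w,
      (∀ γ ∈ idxLe d (2*m), IntegrableOn (fun t => G t γ) (Set.Ioo s T) volume) ∧
      (∀ᵐ t ∂(volume.restrict (Set.Ioo s T)), MemSob d N (2*m) q w (S t s x) (G t)) ∧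
      IntegrableOn (fun t => applyAt d m N q w a t (G t)) (Set.Ioo s T) volume ∧
      HasWDt s T (fun t => S t s x) (fun t => - applyAt d m N q w a t (G t))) ∧
  (∀ t T : ℝ, T < t → ∀ (x : X0 d N q w) (gx : (Fin d → ℕ) → X0 d N q w),
    MemSob d N (2*m) q w x gx →
      IntegrableOn (fun s => S t s (applyAt d m N q w a s gx)) (Set.Ioo T t) volume ∧
      HasWDt T t (fun s => S t s x) (fun s => S t s (applyAt d m N q w a s gx)))

/-- `N × N` complex matrices as a Pi type (so that the sup-norm/`fderiv` machinery applies);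
definitionally equal to `Mat N`. -/
abbrev MatP (N : ℕ) : Type := Fin N → Fin N → ℂ

/-- Matrix multiplication on `MatP`. -/
def mMul {N : ℕ} (A B : MatP N) : MatP N := fun i j => ∑ l, A i l * B l j

/-- The full non-divergence form operator
`A(t)u(x) = ∑_{|α| ≤ m, |β| ≤ m} a_{αβ}(t,x) D^α D^β u(x)` (with `D = -i ∇`), evaluated on
space-time using the spatial derivative witnesses `g γ = ∂^γ u`. -/
def applyAtx (d m N : ℕ) (a : ℝ → Rd d → (Fin d → ℕ) → (Fin d → ℕ) → Mat N)
    (g : (Fin d → ℕ) → STd d → CN N) (z : STd d) : CN N :=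
  ∑ α ∈ idxLe d m, ∑ β ∈ idxLe d m,
    ((-Complex.I) ^ (deg α + deg β)) • matVec (a z.1 z.2 α β) (g (α + β) z)

/-- `u ∈ L^p(ℝ, v; W^{k,q}(ℝ^d, w; ℂ^N))`, with `g` witnessing the spatial distributional
derivatives `g γ = ∂_x^γ u` for `|γ| ≤ k`, all belonging to `L^p(ℝ, v; L^q(ℝ^d, w; ℂ^N))`
(and in particular locally integrable on space-time). -/
def SobClassST (d N k : ℕ) (p q : ℝ) (v : ℝ → ℝ) (w : Rd d → ℝ) (u : STd d → CN N)
    (g : (Fin d → ℕ) → STd d → CN N) : Prop :=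
  g 0 = u ∧ ∀ γ ∈ idxLe d k,
    AEStronglyMeasurable (g γ) volume ∧ LocallyIntegrable (g γ) volume ∧
      nLpLq p q v w (g γ) < ⊤ ∧ HasWDst 0 γ u (g γ)

/-!
The eigenvalues multiply to `det B`, so `r ^ N ≤ ‖det B‖` and `B` is invertible. If
`σ₀ ≥ ⋯ ≥ σ_{N-1}` are the singular values of `B`, then
`‖det B‖ = σ₀ ⋯ σ_{N-1} ≤ ‖B‖ ^ (N-1) σ_{N-1}` and `σ_{N-1} ‖x‖ ≤ ‖B x‖`, whence
`‖det B‖ ‖B⁻¹‖ ≤ ‖B‖ ^ (N-1)`. Finally `r ≤ ‖B‖`, because `‖B‖` dominates the spectrum, so the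
exponent `N - 1` can be raised to any `n ≥ N - 1`.
-/

open Module

namespace LinearMap

variable {𝕜 E F : Type*} [RCLike 𝕜] [NormedAddCommGroup E] [InnerProductSpace 𝕜 E]
  [FiniteDimensional 𝕜 E] [NormedAddCommGroup F] [InnerProductSpace 𝕜 F] [FiniteDimensional 𝕜 F]

theorem IsSymmetric.mul_sq_norm_le_re_inner {T : E →ₗ[𝕜] E} (hT : T.IsSymmetric) {n : ℕ}
    (hn : finrank 𝕜 E = n) {c : ℝ} (hc : ∀ i, c ≤ hT.eigenvalues hn i) (x : E) :
    c * ‖x‖ ^ 2 ≤ RCLike.re (inner 𝕜 x (T x)) := by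
  set b := hT.eigenvectorBasis hn
  have hx : ‖x‖ ^ 2 = ∑ i, ‖b.repr x i‖ ^ 2 := by
    rw [← b.repr.norm_map, EuclideanSpace.norm_sq_eq]
  have hTx : RCLike.re (inner 𝕜 x (T x)) = ∑ i, hT.eigenvalues hn i * ‖b.repr x i‖ ^ 2 := by
    rw [← b.repr.inner_map_map, PiLp.inner_apply, map_sum]
    refine Finset.sum_congr rfl fun i _ => ?_
    rw [hT.eigenvectorBasis_apply_self_apply, RCLike.inner_apply, mul_assoc, RCLike.re_ofReal_mul,
      RCLike.mul_conj, ← RCLike.ofReal_pow, RCLike.ofReal_re]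
  rw [hx, hTx, Finset.mul_sum]
  gcongr with i
  exact hc i

theorem re_inner_adjoint_comp_self (T : E →ₗ[𝕜] F) (x : E) :
    RCLike.re (inner 𝕜 x ((adjoint T ∘ₗ T) x)) = ‖T x‖ ^ 2 := by
  rw [comp_apply, adjoint_inner_right, inner_self_eq_norm_sq]

theorem singularValues_pred_finrank_mul_norm_le (T : E →ₗ[𝕜] F) (x : E) :
    T.singularValues (finrank 𝕜 E - 1) * ‖x‖ ≤ ‖T x‖ := by
  have hsq : T.singularValues (finrank 𝕜 E - 1) ^ 2 * ‖x‖ ^ 2 ≤ ‖T x‖ ^ 2 := by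
    rw [← re_inner_adjoint_comp_self]
    refine T.isSymmetric_adjoint_comp_self.mul_sq_norm_le_re_inner rfl (fun i => ?_) x
    rw [← T.sq_singularValues_fin rfl i]
    have := T.singularValues_antitone (show (i : ℕ) ≤ finrank 𝕜 E - 1 by omega)
    gcongr
    exact T.singularValues_nonneg _
  rw [← mul_pow] at hsq
  exact (pow_le_pow_iff_left₀ (by have := T.singularValues_nonneg (finrank 𝕜 E - 1); positivity)
    (norm_nonneg _) two_ne_zero).1 hsq

end LinearMap

namespace ContinuousLinearMap

variable {𝕜 E F : Type*} [RCLike 𝕜] [NormedAddCommGroup E] [InnerProductSpace 𝕜 E]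
  [FiniteDimensional 𝕜 E] [NormedAddCommGroup F] [InnerProductSpace 𝕜 F] [FiniteDimensional 𝕜 F]

theorem singularValues_le_opNorm (T : E →L[𝕜] F) (i : ℕ) :
    (T : E →ₗ[𝕜] F).singularValues i ≤ ‖T‖ := by
  rcases lt_or_ge i (finrank 𝕜 E) with hi | hi
  · obtain ⟨v, hv⟩ :=
      ((T : E →ₗ[𝕜] F).hasEigenvalue_adjoint_comp_self_sq_singularValues hi).exists_hasEigenvector
    set σ := (T : E →ₗ[𝕜] F).singularValues i
    have hσ : σ ^ 2 * ‖v‖ ^ 2 = ‖T v‖ ^ 2 := by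
      rw [← coe_coe, ← LinearMap.re_inner_adjoint_comp_self, hv.apply_eq_smul, inner_smul_right,
        inner_self_eq_norm_sq_to_K]
      norm_cast
    have hσv : σ * ‖v‖ ≤ ‖T‖ * ‖v‖ := by
      have := (T : E →ₗ[𝕜] F).singularValues_nonneg i
      refine (pow_le_pow_iff_left₀ (by positivity) (by positivity) two_ne_zero).1 ?_
      rw [mul_pow, hσ]
      exact pow_le_pow_left₀ (norm_nonneg _) (T.le_opNorm v) 2
    exact le_of_mul_le_mul_right hσv (norm_pos_iff.2 hv.2)
  · rw [LinearMap.singularValues_of_finrank_le _ hi]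
    exact norm_nonneg T

theorem norm_det_mul_norm_le (T : E →L[𝕜] E) (x : E) :
    ‖LinearMap.det (T : E →ₗ[𝕜] E)‖ * ‖x‖ ≤ ‖T‖ ^ (finrank 𝕜 E - 1) * ‖T x‖ := by
  cases hn : finrank 𝕜 E with
  | zero =>
    have := finrank_zero_iff.mp hn
    simp [Subsingleton.elim x 0]
  | succ n =>
    set σ := (T : E →ₗ[𝕜] E).singularValues
    have hσ (i : ℕ) : 0 ≤ σ i := (T : E →ₗ[𝕜] E).singularValues_nonneg i
    have hσx := (T : E →ₗ[𝕜] E).singularValues_pred_finrank_mul_norm_le x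
    rw [hn, Nat.add_sub_cancel] at hσx
    rw [Nat.add_sub_cancel, ← LinearMap.normDet_eq_norm_det, LinearMap.normDet_eq_prod_singularValues, hn,
      Finset.prod_range_succ, mul_assoc]
    have hprod : ∏ i ∈ Finset.range n, σ i ≤ ‖T‖ ^ n := by
      simpa using Finset.prod_le_prod (fun i _ => hσ i) (fun i _ => T.singularValues_le_opNorm i)
        (s := Finset.range n)
    exact mul_le_mul hprod hσx (by have := hσ n; positivity) (by positivity)

theorem norm_det_mul_opNorm_le_of_mul_eq_one {T S : E →L[𝕜] E} (h : T * S = 1) :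
    ‖LinearMap.det (T : E →ₗ[𝕜] E)‖ * ‖S‖ ≤ ‖T‖ ^ (finrank 𝕜 E - 1) := by
  rw [← norm_smul]
  refine opNorm_le_bound _ (by positivity) fun y => ?_
  rw [smul_apply, norm_smul]
  have hTS : T (S y) = y := by simpa using DFunLike.congr_fun h y
  simpa [hTS] using T.norm_det_mul_norm_le (S y)

end ContinuousLinearMap

theorem Matrix.pow_card_le_norm_det {K n : Type*} [NormedField K] [IsAlgClosed K] [Fintype n]
    [DecidableEq n] (A : Matrix n n K) {r : ℝ} (hr : 0 ≤ r)
    (h : ∀ z ∈ spectrum K A, r ≤ ‖z‖) : r ^ Fintype.card n ≤ ‖A.det‖ := by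
  have hcard : Multiset.card A.charpoly.roots = Fintype.card n := by
    rw [← (IsAlgClosed.splits _).natDegree_eq_card_roots, charpoly_natDegree_eq_dim]
  rw [det_eq_prod_roots_charpoly, ← hcard, ← Multiset.prod_replicate, ← Multiset.map_const']
  refine le_of_le_of_eq ?_ (map_multiset_prod (normHom : K →*₀ ℝ) _).symm
  exact Multiset.prod_map_le_prod_map₀ _ _ (fun _ _ => hr)
    fun z hz => h z (mem_spectrum_of_isRoot_charpoly (Polynomial.isRoot_of_mem_roots hz))

theorem Matrix.det_toEuclideanCLM {𝕜 n : Type*} [RCLike 𝕜] [Fintype n] [DecidableEq n]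
    (A : Matrix n n 𝕜) :
    LinearMap.det (toEuclideanCLM (𝕜 := 𝕜) A : EuclideanSpace 𝕜 n →ₗ[𝕜] _) = A.det := by
  rw [coe_toEuclideanCLM_eq_toEuclideanLin, toEuclideanLin_eq_toLin_orthonormal,
    LinearMap.det_toLin]

theorem le_pow_mul_rpow_of_pow_succ_mul_le {a b r : ℝ} {m n : ℕ} (hr : 0 < r) (hrb : r ≤ b)
    (hmn : m ≤ n) (h : r ^ (m + 1) * a ≤ b ^ m) : a ≤ b ^ n * r ^ (-(n : ℝ) - 1) := by
  have hrpow : r ^ (-(n : ℝ) - 1) = (r ^ (n + 1))⁻¹ := by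
    rw [show -(n : ℝ) - 1 = -((n + 1 : ℕ) : ℝ) by push_cast; ring, Real.rpow_neg hr.le,
      Real.rpow_natCast]
  calc a ≤ b ^ m / r ^ (m + 1) := by rw [le_div_iff₀ (by positivity), mul_comm]; exact h
    _ = (b / r) ^ m / r := by rw [div_pow, pow_succ]; field_simp
    _ ≤ (b / r) ^ n / r := by
      gcongr
      exact (one_le_div hr).2 hrb
    _ = b ^ n * r ^ (-(n : ℝ) - 1) := by rw [hrpow, div_pow, pow_succ]; field_simp

/-- If every eigenvalue `λ` of `B ∈ ℂ^{N×N}` satisfies `|λ| ≥ r > 0`, then `B`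
is invertible and `‖B⁻¹‖ ≤ ‖B‖ⁿ r^{-n-1}` for every integer `n ≥ N - 1`, where `‖·‖` is the
operator norm on `ℂ^N` with the Euclidean norm. -/
theorem statement_4 (N : ℕ) (hN : 0 < N) (B : Mat N) (r : ℝ) (hr : 0 < r)
    (hspec : ∀ z ∈ spectrum ℂ B, r ≤ ‖z‖) :
    IsUnit B ∧ ∀ n : ℕ, N - 1 ≤ n →
      mOpNorm B⁻¹ ≤ mOpNorm B ^ n * r ^ (-(n : ℝ) - 1) := by
  have hdet : r ^ N ≤ ‖B.det‖ := by simpa using B.pow_card_le_norm_det hr.le hspec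
  have hB : IsUnit B :=
    B.isUnit_iff_isUnit_det.2 (norm_pos_iff.1 ((pow_pos hr N).trans_le hdet)).isUnit
  refine ⟨hB, fun n hn => ?_⟩
  have : NeZero N := ⟨hN.ne'⟩
  obtain ⟨z, hz⟩ := spectrum.nonempty (Matrix.toEuclideanCLM (𝕜 := ℂ) B)
  have hzB : z ∈ spectrum ℂ B := by
    rwa [← AlgEquiv.spectrum_eq (Matrix.toEuclideanCLM (𝕜 := ℂ) (n := Fin N))]
  have hrB : r ≤ mOpNorm B := (hspec z hzB).trans (spectrum.norm_le_norm_of_mem hz)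
  have hinv : ‖B.det‖ * mOpNorm B⁻¹ ≤ mOpNorm B ^ (N - 1) := by
    have hmul : Matrix.toEuclideanCLM (𝕜 := ℂ) B * Matrix.toEuclideanCLM (𝕜 := ℂ) B⁻¹ = 1 := by
      rw [← map_mul, B.mul_nonsing_inv (B.isUnit_iff_isUnit_det.1 hB), map_one]
    simpa only [mOpNorm, Matrix.det_toEuclideanCLM, finrank_euclideanSpace,
      Fintype.card_fin] using ContinuousLinearMap.norm_det_mul_opNorm_le_of_mul_eq_one hmul
  refine le_pow_mul_rpow_of_pow_succ_mul_le hr hrB hn ?_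
  rw [Nat.sub_add_cancel hN]
  exact (mul_le_mul_of_nonneg_right hdet (norm_nonneg _)).trans hinv
end
end

section
/- Let 0 < θ₀ < θ < π, set b = |cos(θ−θ₀)| and ε = √((1−b)/2). Then for every λ ∈ ℂ\{0} with |arg λ| ≤ π−θ and every μ ∈ ℂ with μ = 0 or |arg μ| ≤ θ₀, one has |λ + μ| ≥ ε(|λ| + |μ|). -/
/-!
Write `l = ‖λ‖`, `m = ‖μ‖`, so `‖λ + μ‖² = l² + m² + 2lm cos (arg λ - arg μ)`. The arguments
differ by at most `π - (θ - θ₀)`, so the cosine is at least `-cos (θ - θ₀) ≥ -b`, and then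
`l² + m² - 2blm - (1 - b)/2 · (l + m)² = (1 + b)/2 · (l - m)² ≥ 0`.
-/

open MeasureTheory Complex Filter Finset
open scoped ENNReal NNReal Topology

noncomputable section

variable {E : Type*}

open scoped Real

theorem real_inner_eq_norm_mul_norm_mul_cos_arg_sub (z w : ℂ) :
    inner ℝ z w = ‖z‖ * ‖w‖ * Real.cos (z.arg - w.arg) := by
  rw [Complex.inner, Real.cos_sub, Complex.mul_re, Complex.conj_re, Complex.conj_im,
    ← Complex.norm_mul_cos_arg z, ← Complex.norm_mul_sin_arg z,
    ← Complex.norm_mul_cos_arg w, ← Complex.norm_mul_sin_arg w]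
  ring

theorem neg_cos_le_cos_of_abs_le_pi_sub {φ ψ : ℝ} (hψ : 0 ≤ ψ) (h : |φ| ≤ π - ψ) :
    -Real.cos ψ ≤ Real.cos φ := by
  rw [← Real.cos_pi_sub, ← Real.cos_abs φ]
  exact Real.cos_le_cos_of_nonneg_of_le_pi (abs_nonneg φ) (by linarith) h

theorem sqrt_mul_norm_add_norm_le_norm_add {F : Type*} [NormedAddCommGroup F]
    [InnerProductSpace ℝ F] {b : ℝ} (hb : -1 ≤ b) {x y : F}
    (h : -b * (‖x‖ * ‖y‖) ≤ inner ℝ x y) :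
    √((1 - b) / 2) * (‖x‖ + ‖y‖) ≤ ‖x + y‖ := by
  have hsq : (1 - b) / 2 * (‖x‖ + ‖y‖) ^ 2 ≤ ‖x + y‖ ^ 2 := by
    rw [norm_add_sq_real]
    nlinarith [mul_nonneg (by linarith : 0 ≤ 1 + b) (sq_nonneg (‖x‖ - ‖y‖))]
  calc √((1 - b) / 2) * (‖x‖ + ‖y‖) = √((1 - b) / 2 * (‖x‖ + ‖y‖) ^ 2) := by
        rw [Real.sqrt_mul' _ (sq_nonneg _), Real.sqrt_sq (by positivity)]
    _ ≤ √(‖x + y‖ ^ 2) := Real.sqrt_le_sqrt hsq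
    _ = ‖x + y‖ := Real.sqrt_sq (norm_nonneg _)

theorem statement_5_general (θ₀ θ : ℝ) (hθ : θ₀ < θ)
    (lam μ : ℂ) (hargl : |lam.arg| ≤ Real.pi - θ)
    (hμ : μ = 0 ∨ |μ.arg| ≤ θ₀) :
    Real.sqrt ((1 - |Real.cos (θ - θ₀)|) / 2) * (‖lam‖ + ‖μ‖)
      ≤ ‖lam + μ‖ := by
  refine sqrt_mul_norm_add_norm_le_norm_add
    (by linarith [abs_nonneg (Real.cos (θ - θ₀))]) ?_
  rcases hμ with rfl | hargμ
  · simp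
  · have hangle : |lam.arg - μ.arg| ≤ π - (θ - θ₀) := (abs_sub _ _).trans (by linarith)
    have hcos : -|Real.cos (θ - θ₀)| ≤ Real.cos (lam.arg - μ.arg) :=
      (neg_le_neg (le_abs_self _)).trans
        (neg_cos_le_cos_of_abs_le_pi_sub (sub_nonneg.2 hθ.le) hangle)
    rw [real_inner_eq_norm_mul_norm_mul_cos_arg_sub, mul_comm (‖lam‖ * ‖μ‖)]
    exact mul_le_mul_of_nonneg_right hcos (by positivity)

/-- For `0 < θ₀ < θ < π`, `b = |cos(θ - θ₀)|` and `ε = √((1-b)/2)`, every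
`λ ≠ 0` with `|arg λ| ≤ π - θ` and every `μ` with `μ = 0` or `|arg μ| ≤ θ₀` satisfy
`|λ + μ| ≥ ε (|λ| + |μ|)`. -/
theorem statement_5 (θ₀ θ : ℝ) (hθ₀ : 0 < θ₀) (hθ : θ₀ < θ) (hθπ : θ < Real.pi)
    (lam μ : ℂ) (hlam : lam ≠ 0) (hargl : |lam.arg| ≤ Real.pi - θ)
    (hμ : μ = 0 ∨ |μ.arg| ≤ θ₀) :
    Real.sqrt ((1 - |Real.cos (θ - θ₀)|) / 2) * (‖lam‖ + ‖μ‖)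
      ≤ ‖lam + μ‖ :=
  statement_5_general θ₀ θ hθ lam μ hargl hμ
end
end
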